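/- Let α ∈ ℤ, β ∈ ℝ, γ > 0 and n ∈ ℂ³, let E₀ be the twisted wave with parameters (α,β,γ) and polarization vector n, and set k₀ = (0, γ, β) ∈ ℝ³. Then for every x = (r cos φ, r sin φ, z) with r > 0, the cartesian curl satisfies curl E₀(x) = e^{i(αφ + βz)} R_φ N(i k₀ × n) (J_{α+1}(γr), J_{α−1}(γr), J_α(γr))ᵀ, i.e. the curl of a twisted wave is obtained by replacing the polarization vector n by i k₀ × n. -/

import Mathlib

noncomputable section

open Real MeasureTheory

abbrev V3 : Type := Fin 3 → ℝ
abbrev C3 : Type := Fin 3 → ℂ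

/-- Partial derivative of a scalar field in the `i`-th coordinate direction. -/
def pd (i : Fin 3) (f : V3 → ℂ) (x : V3) : ℂ := fderiv ℝ f x (Pi.single i 1)

/-- Componentwise Laplacian of a scalar field. -/
def lap (f : V3 → ℂ) (x : V3) : ℂ := ∑ i, pd i (pd i f) x

/-- Rotation by angle `θ` about the `e₃` axis. -/
def Rot (θ : ℝ) : Matrix (Fin 3) (Fin 3) ℝ :=
  !![Real.cos θ, -Real.sin θ, 0; Real.sin θ, Real.cos θ, 0; 0, 0, 1]

/-- Complexified rotation matrix. -/
def RotC (θ : ℝ) : Matrix (Fin 3) (Fin 3) ℂ := (Rot θ).map (fun a => (a : ℂ))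

/-- The polarization tensor N(n). -/
def Nmat (n : C3) : Matrix (Fin 3) (Fin 3) ℂ :=
  !![(n 0 + Complex.I * n 1)/2, (n 0 - Complex.I * n 1)/2, 0;
     (n 1 - Complex.I * n 0)/2, (n 1 + Complex.I * n 0)/2, 0;
     0, 0, n 2]

/-- Bessel function of integer order, via the Bessel integral
`J_ν(A) = (1/2π) ∫₀^{2π} e^{i(νφ − A sin φ)} dφ`. -/
def besselJ (ν : ℤ) (A : ℝ) : ℂ :=
  (1/(2*Real.pi)) * ∫ φ in (0:ℝ)..(2*Real.pi),
    Complex.exp (Complex.I * (((ν : ℝ) * φ - A * Real.sin φ : ℝ) : ℂ))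

/-- The Bessel vector `(J_{α+1}(γr), J_{α−1}(γr), J_α(γr))`. -/
def Jvec (α : ℤ) (γ r : ℝ) : C3 :=
  ![besselJ (α+1) (γ*r), besselJ (α-1) (γ*r), besselJ α (γ*r)]

/-- Twisted wave with parameters `(α, β, γ)` and polarization vector `n`,
expressed in cylindrical coordinates:
`E₀ = e^{i(αφ+βz)} R_φ N(n) (J_{α+1}(γr), J_{α−1}(γr), J_α(γr))ᵀ`. -/
def twistedCyl (α : ℤ) (β γ : ℝ) (n : C3) (r φ z : ℝ) : C3 :=
  Complex.exp (Complex.I * (((α : ℝ) * φ + β * z : ℝ) : ℂ)) •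
    (RotC φ).mulVec ((Nmat n).mulVec (Jvec α γ r))

/-- Complexified cross product. -/
def crossC (a b : C3) : C3 :=
  ![a 1 * b 2 - a 2 * b 1, a 2 * b 0 - a 0 * b 2, a 0 * b 1 - a 1 * b 0]

/-- Cartesian curl of a vector field. -/
def curl3 (E : V3 → C3) (x : V3) : C3 :=
  ![pd 1 (fun y => E y 2) x - pd 2 (fun y => E y 1) x,
    pd 2 (fun y => E y 0) x - pd 0 (fun y => E y 2) x,
    pd 0 (fun y => E y 1) x - pd 1 (fun y => E y 0) x]

open Matrix Filter Topology
open Complex (I)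
open scoped Complex

/-!
Over a full turn of the angle ψ, the twisted wave is the superposition of the plane
waves `e^{i (R_ψ k₀)·x} e^{iαψ} R_ψ n / 2π`. This is because `N(n)` diagonalises the rotations,
`R_φ N(n) = N(n) diag(e^{iφ}, e^{-iφ}, 1)` and `n = N(n) (1, 1, 1)ᵀ`, so that after the shift
`ψ ↦ ψ + φ` each coordinate of the integral is a Bessel integral. The curl of a plane wave
`e^{ik·x} c` is `e^{ik·x} (i k × c)`, and `R_ψ k₀ × R_ψ n = R_ψ (k₀ × n)`, so differentiating under
the integral sign replaces `n` by `i k₀ × n`. Finally `E` agrees with the superposition on the open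
set `r > 0`, where the curl only depends on the germ of `E`.
-/

def planeWave (k x : V3) : ℂ := cexp (I * ((k ⬝ᵥ x : ℝ) : ℂ))

@[fun_prop]
lemma Continuous.planeWave {X : Type*} [TopologicalSpace X] {k x : X → V3} (hk : Continuous k)
    (hx : Continuous x) : Continuous fun t => _root_.planeWave (k t) (x t) := by
  unfold _root_.planeWave dotProduct; fun_prop

lemma norm_planeWave (k x : V3) : ‖planeWave k x‖ = 1 := by
  rw [planeWave, mul_comm, Complex.norm_exp_ofReal_mul_I]

def dotProductCLM (k : V3) : V3 →L[ℝ] ℂ := ∑ j, (k j : ℂ) • Complex.ofRealCLM.comp (.proj j)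

lemma dotProductCLM_apply (k y : V3) : dotProductCLM k y = (k ⬝ᵥ y : ℝ) := by
  simp [dotProductCLM, dotProduct]

lemma continuous_dotProductCLM : Continuous dotProductCLM := by
  unfold dotProductCLM; fun_prop

lemma hasFDerivAt_planeWave (k x : V3) :
    HasFDerivAt (planeWave k) (planeWave k x • I • dotProductCLM k) x := by
  have h : HasFDerivAt (fun y => I * ((k ⬝ᵥ y : ℝ) : ℂ)) (I • dotProductCLM k) x := by
    convert (I • dotProductCLM k).hasFDerivAt using 2 with y
    simp [dotProductCLM_apply]
  exact h.cexp

def planeWaveIntegral (a b : ℝ) (k : ℝ → V3) (c : ℝ → C3) (x : V3) : C3 :=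
  fun i => ∫ ψ in a..b, planeWave (k ψ) x * c ψ i

section PlaneWaveIntegral

variable {a b : ℝ} {k : ℝ → V3}

lemma hasFDerivAt_integral_planeWave_mul {c : ℝ → ℂ} (hk : Continuous k) (hc : Continuous c)
    (x : V3) :
    HasFDerivAt (fun y => ∫ ψ in a..b, planeWave (k ψ) y * c ψ)
      (∫ ψ in a..b, c ψ • planeWave (k ψ) x • I • dotProductCLM (k ψ)) x := by
  have hL : Continuous fun ψ => dotProductCLM (k ψ) := continuous_dotProductCLM.comp hk
  have h_int : IntervalIntegrable (fun ψ => planeWave (k ψ) x * c ψ) volume a b := by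
    apply Continuous.intervalIntegrable; fun_prop
  have h_meas : Continuous fun ψ => c ψ • planeWave (k ψ) x • I • dotProductCLM (k ψ) := by fun_prop
  have h_bound : ∀ ψ y, ‖c ψ • planeWave (k ψ) y • I • dotProductCLM (k ψ)‖ = ‖c ψ‖ * ‖dotProductCLM (k ψ)‖ :=
    fun ψ y => by rw [norm_smul, norm_smul, norm_planeWave, norm_smul, Complex.norm_I]; ring
  have h_bound_int : IntervalIntegrable (fun ψ => ‖c ψ‖ * ‖dotProductCLM (k ψ)‖) volume a b :=
    (hc.norm.mul hL.norm).intervalIntegrable _ _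
  have h_diff : ∀ ψ y, HasFDerivAt (fun y => planeWave (k ψ) y * c ψ)
      (c ψ • planeWave (k ψ) y • I • dotProductCLM (k ψ)) y :=
    fun ψ y => (hasFDerivAt_planeWave (k ψ) y).mul_const (c ψ)
  exact intervalIntegral.hasFDerivAt_integral_of_dominated_of_fderiv_le univ_mem
    (Eventually.of_forall fun y => (by fun_prop : Continuous _).aestronglyMeasurable) h_int
    h_meas.aestronglyMeasurable (Eventually.of_forall fun ψ _ y _ => (h_bound ψ y).le)
    h_bound_int (Eventually.of_forall fun ψ _ y _ => h_diff ψ y)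

lemma pd_integral_planeWave_mul {c : ℝ → ℂ} (hk : Continuous k) (hc : Continuous c)
    (j : Fin 3) (x : V3) :
    pd j (fun y => ∫ ψ in a..b, planeWave (k ψ) y * c ψ) x
      = ∫ ψ in a..b, planeWave (k ψ) x * c ψ * (I * k ψ j) := by
  have hL : Continuous fun ψ => dotProductCLM (k ψ) := continuous_dotProductCLM.comp hk
  have h_int : IntervalIntegrable (fun ψ => c ψ • planeWave (k ψ) x • I • dotProductCLM (k ψ))
      volume a b := by
    apply Continuous.intervalIntegrable; fun_prop
  rw [pd, (hasFDerivAt_integral_planeWave_mul hk hc x).fderiv,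
    ContinuousLinearMap.intervalIntegral_apply h_int]
  congr 1 with ψ
  simp [dotProductCLM_apply, dotProduct_single]
  ring

theorem curl3_planeWaveIntegral {c : ℝ → C3} (hk : Continuous k) (hc : Continuous c) (x : V3) :
    curl3 (planeWaveIntegral a b k c) x
      = planeWaveIntegral a b k (fun ψ => I • crossC (fun j => (k ψ j : ℂ)) (c ψ)) x := by
  have hpd : ∀ i j, pd j (fun y => ∫ ψ in a..b, planeWave (k ψ) y * c ψ i) x
      = ∫ ψ in a..b, planeWave (k ψ) x * c ψ i * (I * k ψ j) :=
    fun i j => pd_integral_planeWave_mul hk (by fun_prop) j x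
  have h_int : ∀ i j, IntervalIntegrable (fun ψ => planeWave (k ψ) x * c ψ i * (I * k ψ j))
      volume a b :=
    fun i j => by apply Continuous.intervalIntegrable; fun_prop
  ext i
  fin_cases i <;>
  · simp only [curl3, planeWaveIntegral, hpd, Fin.zero_eta, Fin.mk_one, Fin.reduceFinMk,
      cons_val]
    rw [← intervalIntegral.integral_sub (h_int _ _) (h_int _ _)]
    congr 1 with ψ
    simp [crossC]
    ring

end PlaneWaveIntegral

lemma rot_mulVec (ψ : ℝ) (v : V3) :
    Rot ψ *ᵥ v = ![cos ψ * v 0 - sin ψ * v 1, sin ψ * v 0 + cos ψ * v 1, v 2] := by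
  ext i; fin_cases i <;> simp [Rot, mulVec, dotProduct, Fin.sum_univ_three]; ring

lemma rotC_mulVec (ψ : ℝ) (v : C3) :
    RotC ψ *ᵥ v = ![cos ψ * v 0 - sin ψ * v 1, sin ψ * v 0 + cos ψ * v 1, v 2] := by
  ext i; fin_cases i <;> simp [RotC, Rot, mulVec, dotProduct, Fin.sum_univ_three]; ring

lemma ofReal_rot_mulVec (ψ : ℝ) (v : V3) :
    (fun j => ((Rot ψ *ᵥ v) j : ℂ)) = RotC ψ *ᵥ fun j => (v j : ℂ) := by
  ext i; fin_cases i <;> simp [rot_mulVec, rotC_mulVec]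

lemma crossC_eq_cross (a b : C3) : crossC a b = a ⨯₃ b := rfl

lemma crossC_rotC_mulVec (ψ : ℝ) (a b : C3) :
    crossC (RotC ψ *ᵥ a) (RotC ψ *ᵥ b) = RotC ψ *ᵥ crossC a b := by
  ext i; fin_cases i <;> simp only [rotC_mulVec, crossC] <;> simp
  · ring
  · ring
  · linear_combination (a 0 * b 1 - a 1 * b 0) * Complex.sin_sq_add_cos_sq (ψ : ℂ)

def helicity : Fin 3 → ℤ := ![1, -1, 0]

lemma rotC_mulVec_nmat_mulVec (φ : ℝ) (n v : C3) :
    RotC φ *ᵥ (Nmat n *ᵥ v) = Nmat n *ᵥ fun j => cexp (I * ((helicity j * φ : ℝ) : ℂ)) * v j := by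
  have hp : cexp (I * φ) = Complex.cos φ + Complex.sin φ * I := by
    rw [mul_comm, Complex.exp_mul_I]
  have hm : cexp (-(I * φ)) = Complex.cos φ - Complex.sin φ * I := by
    rw [← mul_neg, mul_comm, Complex.exp_mul_I, Complex.cos_neg, Complex.sin_neg]; ring
  rw [rotC_mulVec]
  ext i; fin_cases i <;> simp [Nmat, helicity, mulVec, dotProduct, Fin.sum_univ_three, hp, hm]
  · linear_combination (-Complex.sin φ * n 1 * (v 0 + v 1) / 2) * Complex.I_sq
  · linear_combination (Complex.sin φ * n 0 * (v 0 + v 1) / 2) * Complex.I_sq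

lemma nmat_mulVec_one (n : C3) : Nmat n *ᵥ (fun _ => 1) = n := by
  ext i; fin_cases i <;> simp [Nmat, mulVec, dotProduct, Fin.sum_univ_three] <;> ring

lemma rotC_mulVec_eq_nmat_mulVec (ψ : ℝ) (n : C3) :
    RotC ψ *ᵥ n = Nmat n *ᵥ fun j => cexp (I * ((helicity j * ψ : ℝ) : ℂ)) := by
  simpa only [nmat_mulVec_one, mul_one] using rotC_mulVec_nmat_mulVec ψ n (fun _ => 1)

lemma jvec_apply (α : ℤ) (γ r : ℝ) (j : Fin 3) :
    Jvec α γ r j = besselJ (α + helicity j) (γ * r) := by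
  fin_cases j <;> simp [Jvec, helicity, sub_eq_add_neg]

lemma periodic_besselIntegrand (ν : ℤ) (A : ℝ) :
    Function.Periodic (fun θ : ℝ => cexp (I * (((ν : ℝ) * θ - A * sin θ : ℝ) : ℂ))) (2 * π) := by
  intro θ
  have h : I * (((ν : ℝ) * (θ + 2 * π) - A * sin (θ + 2 * π) : ℝ) : ℂ)
      = I * (((ν : ℝ) * θ - A * sin θ : ℝ) : ℂ) + ν * (2 * π * I) := by
    push_cast [sin_add_two_pi]; ring
  simp only [h, Complex.exp_add, Complex.exp_int_mul_two_pi_mul_I, mul_one]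

lemma integral_exp_sub_sin_sub (ν : ℤ) (A φ : ℝ) :
    ∫ ψ in (0 : ℝ)..2 * π, cexp (I * (((ν : ℝ) * ψ - A * sin (ψ - φ) : ℝ) : ℂ))
      = 2 * π * cexp (I * (((ν : ℝ) * φ : ℝ) : ℂ)) * besselJ ν A := by
  set g := fun θ : ℝ => cexp (I * (((ν : ℝ) * θ - A * sin θ : ℝ) : ℂ))
  have h_split : ∀ ψ, cexp (I * (((ν : ℝ) * ψ - A * sin (ψ - φ) : ℝ) : ℂ))
      = cexp (I * (((ν : ℝ) * φ : ℝ) : ℂ)) * g (ψ - φ) := fun ψ => by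
    rw [← Complex.exp_add]; push_cast; ring_nf
  have h_shift : ∫ ψ in (0 : ℝ)..2 * π, g (ψ - φ) = ∫ θ in (0 : ℝ)..2 * π, g θ := by
    rw [intervalIntegral.integral_comp_sub_right g φ, zero_sub, sub_eq_neg_add,
      (periodic_besselIntegrand ν A).intervalIntegral_add_eq (-φ) 0, zero_add]
  have h_bessel : ∫ θ in (0 : ℝ)..2 * π, g θ = 2 * π * besselJ ν A := by
    rw [besselJ]; field_simp; rfl
  simp only [h_split, intervalIntegral.integral_const_mul, h_shift, h_bessel]
  ring

def coneSuperposition (α : ℤ) (k₀ : V3) (n : C3) : V3 → C3 :=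
  planeWaveIntegral 0 (2 * π) (fun ψ => Rot ψ *ᵥ k₀)
    (fun ψ => ((2 * π : ℂ)⁻¹ * cexp (I * (((α : ℝ) * ψ : ℝ) : ℂ))) • RotC ψ *ᵥ n)

lemma planeWave_rot_mulVec_cylindrical (β γ r φ z ψ : ℝ) :
    planeWave (Rot ψ *ᵥ ![0, γ, β]) ![r * cos φ, r * sin φ, z]
      = cexp (I * ((β * z : ℝ) : ℂ)) * cexp (I * ((-(γ * r) * sin (ψ - φ) : ℝ) : ℂ)) := by
  rw [planeWave, ← Complex.exp_add, rot_mulVec, sin_sub]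
  congr 1
  simp [dotProduct, Fin.sum_univ_three]
  ring

theorem twistedCyl_eq_coneSuperposition (α : ℤ) (β γ : ℝ) (n : C3) (r φ z : ℝ) :
    twistedCyl α β γ n r φ z = coneSuperposition α ![0, γ, β] n ![r * cos φ, r * sin φ, z] := by
  set g : Fin 3 → ℝ → ℂ := fun j ψ =>
    cexp (I * ((((α + helicity j : ℤ) : ℝ) * ψ - γ * r * sin (ψ - φ) : ℝ) : ℂ))
  have h_integrand : ∀ i ψ, planeWave (Rot ψ *ᵥ ![0, γ, β]) ![r * cos φ, r * sin φ, z]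
      * (((2 * π : ℂ)⁻¹ * cexp (I * (((α : ℝ) * ψ : ℝ) : ℂ))) • RotC ψ *ᵥ n) i
      = ∑ j, Nmat n i j * ((2 * π : ℂ)⁻¹ * cexp (I * ((β * z : ℝ) : ℂ))) * g j ψ := by
    intro i ψ
    simp only [planeWave_rot_mulVec_cylindrical, rotC_mulVec_eq_nmat_mulVec, Pi.smul_apply,
      smul_eq_mul, mulVec, dotProduct, Finset.mul_sum]
    refine Finset.sum_congr rfl fun j _ => ?_
    have hg : g j ψ = cexp (I * (((α : ℝ) * ψ : ℝ) : ℂ)) * cexp (I * ((helicity j * ψ : ℝ) : ℂ))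
        * cexp (I * ((-(γ * r) * sin (ψ - φ) : ℝ) : ℂ)) := by
      simp only [g, ← Complex.exp_add]; push_cast; ring_nf
    rw [hg]
    ring
  have hg_int : ∀ j, IntervalIntegrable (g j) volume 0 (2 * π) :=
    fun j => by apply Continuous.intervalIntegrable; fun_prop
  ext i
  simp only [coneSuperposition, planeWaveIntegral, h_integrand]
  rw [intervalIntegral.integral_finsetSum fun j _ => (hg_int j).const_mul _]
  simp only [intervalIntegral.integral_const_mul, g, integral_exp_sub_sin_sub, twistedCyl,
    rotC_mulVec_nmat_mulVec, jvec_apply, Pi.smul_apply, smul_eq_mul, mulVec, dotProduct,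
    Finset.mul_sum]
  refine Finset.sum_congr rfl fun j _ => ?_
  have h_phase : cexp (I * (((α : ℝ) * φ + β * z : ℝ) : ℂ)) * cexp (I * ((helicity j * φ : ℝ) : ℂ))
      = cexp (I * ((β * z : ℝ) : ℂ)) * cexp (I * ((((α + helicity j : ℤ) : ℝ) * φ : ℝ) : ℂ)) := by
    simp only [← Complex.exp_add]; push_cast; ring_nf
  have h2pi : (2 * π : ℂ)⁻¹ * (2 * π) = 1 := inv_mul_cancel₀ (by simp [pi_ne_zero])
  linear_combination (Nmat n i j * besselJ (α + helicity j) (γ * r)) * h_phase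
    - (Nmat n i j * besselJ (α + helicity j) (γ * r) * cexp (I * ((β * z : ℝ) : ℂ))
      * cexp (I * ((((α + helicity j : ℤ) : ℝ) * φ : ℝ) : ℂ))) * h2pi

theorem curl3_coneSuperposition (α : ℤ) (k₀ : V3) (n : C3) (x : V3) :
    curl3 (coneSuperposition α k₀ n) x
      = coneSuperposition α k₀ (I • crossC (fun j => (k₀ j : ℂ)) n) x := by
  have hk : Continuous fun ψ => Rot ψ *ᵥ k₀ := by simp only [rot_mulVec]; fun_prop
  have hc : Continuous fun ψ =>
      ((2 * π : ℂ)⁻¹ * cexp (I * (((α : ℝ) * ψ : ℝ) : ℂ))) • RotC ψ *ᵥ n := by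
    simp only [rotC_mulVec]; fun_prop
  rw [coneSuperposition, curl3_planeWaveIntegral hk hc]
  congr 2 with ψ : 1
  rw [ofReal_rot_mulVec, crossC_eq_cross, map_smul, ← crossC_eq_cross, crossC_rotC_mulVec,
    mulVec_smul, smul_comm]

lemma pd_congr_of_eventuallyEq {f g : V3 → ℂ} {x : V3} (h : f =ᶠ[𝓝 x] g) (j : Fin 3) :
    pd j f x = pd j g x := by
  rw [pd, pd, h.fderiv_eq]

lemma curl3_congr_of_eventuallyEq {E F : V3 → C3} {x : V3} (h : E =ᶠ[𝓝 x] F) :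
    curl3 E x = curl3 F x := by
  have hi : ∀ i, (fun y => E y i) =ᶠ[𝓝 x] fun y => F y i := fun i => h.mono fun y hy => congrFun hy i
  simp only [curl3, pd_congr_of_eventuallyEq (hi _)]

lemma eventually_exists_cylindrical {r : ℝ} (hr : 0 < r) (φ z : ℝ) :
    ∀ᶠ y in 𝓝 (![r * cos φ, r * sin φ, z] : V3),
      ∃ ρ θ, 0 < ρ ∧ (![ρ * cos θ, ρ * sin θ, y 2] : V3) = y := by
  set w : V3 → ℂ := fun y => y 0 + y 1 * I
  have hw : Continuous w := by fun_prop
  have hx : w ![r * cos φ, r * sin φ, z] ≠ 0 := by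
    intro h0
    have hre : r * cos φ = 0 := by simpa [w, -Complex.ofReal_cos] using congrArg Complex.re h0
    have him : r * sin φ = 0 := by simpa [w, -Complex.ofReal_sin] using congrArg Complex.im h0
    have hr2 : r ^ 2 = (r * cos φ) ^ 2 + (r * sin φ) ^ 2 := by
      linear_combination r ^ 2 * (cos_sq_add_sin_sq φ).symm
    rw [hre, him] at hr2
    nlinarith
  filter_upwards [hw.continuousAt.eventually_ne hx] with y hy
  refine ⟨‖w y‖, (w y).arg, norm_pos_iff.mpr hy, ?_⟩
  ext i; fin_cases i
  · simp [w, Complex.norm_mul_cos_arg]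
  · simp [w, Complex.norm_mul_sin_arg]
  · rfl

theorem twistedWave_curl
    (α : ℤ) (β γ : ℝ) (n : C3)
    (E : V3 → C3)
    (hE : ∀ r φ z : ℝ, 0 < r →
      E ![r * Real.cos φ, r * Real.sin φ, z] = twistedCyl α β γ n r φ z) :
    ∀ r φ z : ℝ, 0 < r →
      curl3 E ![r * Real.cos φ, r * Real.sin φ, z] =
        twistedCyl α β γ (Complex.I • crossC ![0, (γ : ℂ), (β : ℂ)] n) r φ z := by
  intro r φ z hr
  have hEF : E =ᶠ[𝓝 ![r * cos φ, r * sin φ, z]] coneSuperposition α ![0, γ, β] n := by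
    filter_upwards [eventually_exists_cylindrical hr φ z] with y ⟨ρ, θ, hρ, hy⟩
    rw [← hy, hE ρ θ (y 2) hρ, twistedCyl_eq_coneSuperposition]
  have hk₀ : (fun j => ((![0, γ, β] : V3) j : ℂ)) = ![0, (γ : ℂ), (β : ℂ)] := by
    ext j; fin_cases j <;> simp
  rw [curl3_congr_of_eventuallyEq hEF, curl3_coneSuperposition, hk₀,
    twistedCyl_eq_coneSuperposition]
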